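/- Let C : ℝⁿ → ℝᴺ have components C_i that are homogeneous polynomials of degree at most d, with Taylor expansion C(z+ε) = C(z) + Jε + Σ_{j=2}^d (1/j!)(ε × T_j). Suppose J (the Jacobian at z) has linearly independent rows and C(z) ∈ Im J. Then ‖ε^S‖ ≤ ‖ε^G‖ + ‖J†‖ · Σ_{j=2}^d (μ_j/j!) ‖ε^G‖_j^j, where ε^S = −J†C(z), μ_j bounds the j-th order Taylor terms as ‖ε × T_j‖ ≤ μ_j ‖ε‖_j^j, and ε^G is the minimum-norm solution of C(z+ε)=0. -/

import Mathlib

open Matrix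

/-- The Euclidean norm of a vector in `ℝⁿ`. -/
noncomputable def euclNorm {n : ℕ} (v : Fin n → ℝ) : ℝ :=
  Real.sqrt (∑ i, v i ^ 2)

/-- The operator norm of a matrix with respect to the Euclidean norms. -/
noncomputable def opNorm {m n : ℕ} (A : Matrix (Fin m) (Fin n) ℝ) : ℝ :=
  ‖LinearMap.toContinuousLinearMap (Matrix.toEuclideanLin A)‖

/-!
Expanding `C` around `z` at the root `ε^G` gives `C z = -J ε^G - R`, where `R` collects the
Taylor terms of order `≥ 2`. Hence `ε^S = J†J ε^G + J† R`. By the Penrose conditions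
`J†JJ† = J†` and `(J†J)ᵀ = J†J`, the matrix `J†J` is an orthogonal projection, so
`‖J†J ε^G‖ ≤ ‖ε^G‖`, while `‖J† R‖ ≤ ‖J†‖ ‖R‖` and `‖R‖` is bounded termwise by the `μ_j`.
-/

open WithLp

lemma euclNorm_eq_norm_toLp {n : ℕ} (v : Fin n → ℝ) : euclNorm v = ‖toLp 2 v‖ := by
  simp [euclNorm, EuclideanSpace.norm_eq]

lemma euclNorm_nonneg {n : ℕ} (v : Fin n → ℝ) : 0 ≤ euclNorm v := Real.sqrt_nonneg _

lemma euclNorm_add_le {n : ℕ} (v w : Fin n → ℝ) :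
    euclNorm (v + w) ≤ euclNorm v + euclNorm w := by
  simpa only [euclNorm_eq_norm_toLp, toLp_add] using norm_add_le _ _

lemma euclNorm_sum_le {ι : Type*} {n : ℕ} (s : Finset ι) (v : ι → Fin n → ℝ) :
    euclNorm (∑ j ∈ s, v j) ≤ ∑ j ∈ s, euclNorm (v j) := by
  simpa only [euclNorm_eq_norm_toLp, toLp_sum] using norm_sum_le _ _

lemma euclNorm_smul {n : ℕ} (c : ℝ) (v : Fin n → ℝ) :
    euclNorm (c • v) = |c| * euclNorm v := by
  simp only [euclNorm_eq_norm_toLp, toLp_smul, norm_smul, Real.norm_eq_abs]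

lemma opNorm_nonneg {m n : ℕ} (A : Matrix (Fin m) (Fin n) ℝ) : 0 ≤ opNorm A := norm_nonneg _

lemma euclNorm_mulVec_le_opNorm_mul {m n : ℕ} (A : Matrix (Fin m) (Fin n) ℝ) (v : Fin n → ℝ) :
    euclNorm (A *ᵥ v) ≤ opNorm A * euclNorm v := by
  rw [euclNorm_eq_norm_toLp, euclNorm_eq_norm_toLp]
  exact (LinearMap.toContinuousLinearMap (toEuclideanLin A)).le_opNorm (toLp 2 v)

lemma IsStarProjection.opNorm_le_one {n : ℕ} {P : Matrix (Fin n) (Fin n) ℝ}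
    (hP : IsStarProjection P) : opNorm P ≤ 1 :=
  (hP.map (toEuclideanCLM (n := Fin n) (𝕜 := ℝ))).norm_le

lemma IsStarProjection.euclNorm_mulVec_le {n : ℕ} {P : Matrix (Fin n) (Fin n) ℝ}
    (hP : IsStarProjection P) (v : Fin n → ℝ) : euclNorm (P *ᵥ v) ≤ euclNorm v :=
  (euclNorm_mulVec_le_opNorm_mul P v).trans <|
    mul_le_of_le_one_left (euclNorm_nonneg v) hP.opNorm_le_one

lemma isStarProjection_mul_of_penrose {m n : ℕ} {A : Matrix (Fin m) (Fin n) ℝ}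
    {B : Matrix (Fin n) (Fin m) ℝ} (hBAB : B * A * B = B) (hsymm : (B * A)ᵀ = B * A) :
    IsStarProjection (B * A) where
  isIdempotentElem := by rw [IsIdempotentElem, ← Matrix.mul_assoc, hBAB]
  isSelfAdjoint := by simpa only [IsSelfAdjoint, star_eq_conjTranspose,
    conjTranspose_eq_transpose_of_trivial] using hsymm

noncomputable def higherOrderTerms {n N : ℕ} (d : ℕ) (T : ℕ → (Fin n → ℝ) → Fin N → ℝ)
    (ε : Fin n → ℝ) : Fin N → ℝ :=
  ∑ j ∈ Finset.Icc 2 d, (1 / (j.factorial : ℝ)) • T j ε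

lemma euclNorm_higherOrderTerms_le {n N : ℕ} (d : ℕ) (T : ℕ → (Fin n → ℝ) → Fin N → ℝ)
    (μ : ℕ → ℝ) (hμ : ∀ (j : ℕ) (ε : Fin n → ℝ), euclNorm (T j ε) ≤ μ j * ∑ k, |ε k| ^ j)
    (ε : Fin n → ℝ) :
    euclNorm (higherOrderTerms d T ε) ≤
      ∑ j ∈ Finset.Icc 2 d, (μ j / (j.factorial : ℝ)) * ∑ k, |ε k| ^ j := by
  refine (euclNorm_sum_le _ _).trans (Finset.sum_le_sum fun j _ => ?_)
  have hj : (0 : ℝ) < j.factorial := mod_cast j.factorial_pos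
  calc euclNorm ((1 / (j.factorial : ℝ)) • T j ε)
      = euclNorm (T j ε) / j.factorial := by
        rw [euclNorm_smul, abs_of_pos (by positivity)]; ring
    _ ≤ μ j * (∑ k, |ε k| ^ j) / j.factorial := by gcongr; exact hμ j ε
    _ = μ j / j.factorial * ∑ k, |ε k| ^ j := by ring

lemma eq_neg_mulVec_sub_higherOrderTerms_of_root {n N d : ℕ} {C : (Fin n → ℝ) → Fin N → ℝ}
    {z : Fin n → ℝ} {J : Matrix (Fin N) (Fin n) ℝ} {T : ℕ → (Fin n → ℝ) → Fin N → ℝ}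
    (hTaylor : ∀ ε i, C (z + ε) i =
      C z i + J.mulVec ε i + ∑ j ∈ Finset.Icc 2 d, (1 / (j.factorial : ℝ)) * T j ε i)
    {ε : Fin n → ℝ} (hroot : C (z + ε) = 0) :
    C z = -(J *ᵥ ε) - higherOrderTerms d T ε := by
  funext i
  have h := hTaylor ε i
  simp only [hroot, Pi.zero_apply] at h
  simp only [higherOrderTerms, Pi.sub_apply, Pi.neg_apply, Finset.sum_apply, Pi.smul_apply,
    smul_eq_mul]
  linarith

theorem stmt9_general {n N d : ℕ} (C : (Fin n → ℝ) → Fin N → ℝ) (z : Fin n → ℝ)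
    (J : Matrix (Fin N) (Fin n) ℝ)
    (T : ℕ → (Fin n → ℝ) → Fin N → ℝ) (μ : ℕ → ℝ)
    (hTaylor : ∀ ε i, C (z + ε) i =
      C z i + J.mulVec ε i + ∑ j ∈ Finset.Icc 2 d, (1 / (j.factorial : ℝ)) * T j ε i)
    (hμ : ∀ (j : ℕ) (ε : Fin n → ℝ), euclNorm (T j ε) ≤ μ j * ∑ k, |ε k| ^ j)
    (Jp : Matrix (Fin n) (Fin N) ℝ)
    (hp2 : Jp * J * Jp = Jp)
    (hp4 : (Jp * J)ᵀ = Jp * J)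
    (εS : Fin n → ℝ) (hεS : εS = -(Jp.mulVec (C z)))
    (εG : Fin n → ℝ) (hG : C (z + εG) = 0) :
    euclNorm εS ≤ euclNorm εG +
      opNorm Jp * ∑ j ∈ Finset.Icc 2 d, (μ j / (j.factorial : ℝ)) * ∑ k, |εG k| ^ j := by
  have hsplit : εS = (Jp * J) *ᵥ εG + Jp *ᵥ higherOrderTerms d T εG := by
    rw [hεS, eq_neg_mulVec_sub_higherOrderTerms_of_root hTaylor hG, mulVec_sub, mulVec_neg,
      mulVec_mulVec]
    abel
  rw [hsplit]
  refine (euclNorm_add_le _ _).trans (add_le_add ?_ ?_)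
  · exact (isStarProjection_mul_of_penrose hp2 hp4).euclNorm_mulVec_le εG
  · exact (euclNorm_mulVec_le_opNorm_mul _ _).trans <| mul_le_mul_of_nonneg_left
      (euclNorm_higherOrderTerms_le d T μ hμ εG) (opNorm_nonneg Jp)

/-- For `N` constraints `C : ℝⁿ → ℝᴺ` with Taylor expansion
`C (z + ε) = C z + J ε + ∑_{j=2}^d (1/j!) (ε × T_j)`, where the Jacobian `J` at `z`
has linearly independent rows and `C z ∈ Im J`:
`‖ε^S‖ ≤ ‖ε^G‖ + ‖J†‖ ∑_{j=2}^d (μ_j / j!) ‖ε^G‖_j^j`, where `ε^S = −J† (C z)`,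
the `μ_j` bound the Taylor terms by `‖ε × T_j‖ ≤ μ_j ‖ε‖_j^j`, and `ε^G` is the
minimum-norm solution of `C (z + ε) = 0`. Here `J†` is the Moore–Penrose
pseudoinverse of `J`, characterized by the four Penrose conditions. -/
theorem stmt9 {n N d : ℕ} (C : (Fin n → ℝ) → Fin N → ℝ) (z : Fin n → ℝ)
    (J : Matrix (Fin N) (Fin n) ℝ)
    (T : ℕ → (Fin n → ℝ) → Fin N → ℝ) (μ : ℕ → ℝ)
    (hTaylor : ∀ ε i, C (z + ε) i =
      C z i + J.mulVec ε i + ∑ j ∈ Finset.Icc 2 d, (1 / (j.factorial : ℝ)) * T j ε i)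
    (hμ : ∀ (j : ℕ) (ε : Fin n → ℝ), euclNorm (T j ε) ≤ μ j * ∑ k, |ε k| ^ j)
    (hrank : LinearIndependent ℝ (fun i => J i))
    (him : ∃ x, J.mulVec x = C z)
    (Jp : Matrix (Fin n) (Fin N) ℝ)
    (hp1 : J * Jp * J = J) (hp2 : Jp * J * Jp = Jp)
    (hp3 : (J * Jp)ᵀ = J * Jp) (hp4 : (Jp * J)ᵀ = Jp * J)
    (εS : Fin n → ℝ) (hεS : εS = -(Jp.mulVec (C z)))
    (εG : Fin n → ℝ) (hG : C (z + εG) = 0)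
    (hGmin : ∀ ε, C (z + ε) = 0 → euclNorm εG ≤ euclNorm ε) :
    euclNorm εS ≤ euclNorm εG +
      opNorm Jp * ∑ j ∈ Finset.Icc 2 d, (μ j / (j.factorial : ℝ)) * ∑ k, |εG k| ^ j :=
  stmt9_general C z J T μ hTaylor hμ Jp hp2 hp4 εS hεS εG hG
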